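/- Let G be a countable directed graph which is cofinal and whose set NW_G of non-wandering vertices is non-empty, F a potential on G, and β ∈ ℝ. Then every e^{βF}-conformal measure m is concentrated either on P(G)_rec or on P(G)_wan, i.e. either m(P(G) \ P(G)_rec) = 0 or m(P(G) \ P(G)_wan) = 0. -/

import Mathlib

open MeasureTheory
open scoped ENNReal

/-- A countable directed graph: countable sets of vertices and arrows together with
source and range maps. -/
structure CDG where
  V : Type
  A : Type
  countV : Countable V
  countA : Countable A
  src : A → V
  rng : A → V

attribute [instance] CDG.countV CDG.countA

namespace CDG

/-- The space `P(G)` of infinite paths in `G`. -/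
abbrev PathSpace (G : CDG) : Type :=
  {p : ℕ → G.A // ∀ i : ℕ, G.rng (p i) = G.src (p (i + 1))}

/-- The source vertex of an infinite path. -/
def isrc {G : CDG} (p : G.PathSpace) : G.V := G.src (p.1 0)

/-- The shift map `σ` on `P(G)`. -/
def shift {G : CDG} (p : G.PathSpace) : G.PathSpace :=
  ⟨fun i => p.1 (i + 1), fun i => p.2 (i + 1)⟩

/-- A countable set carries the discrete (Borel) σ-algebra. -/
instance (G : CDG) : MeasurableSpace G.A := ⊤

/-- A finite path in `G`: a base vertex together with a (possibly empty) string of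
composable arrows starting at the base vertex.  A finite path with no arrows is a vertex. -/
structure FinPath (G : CDG) where
  base : G.V
  arrows : List G.A
  head_src : ∀ a ∈ arrows.head?, G.src a = base
  chain : arrows.Chain' fun a b => G.rng a = G.src b

namespace FinPath

variable {G : CDG}

/-- The length `|μ|` of a finite path. -/
def length (μ : FinPath G) : ℕ := μ.arrows.length

/-- The source `s(μ)` of a finite path. -/
def fsrc (μ : FinPath G) : G.V := μ.base

/-- The range `r(μ)` of a finite path. -/
def frng (μ : FinPath G) : G.V := μ.arrows.getLast?.elim μ.base G.rng

/-- A vertex, regarded as a finite path of length `0`. -/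
def ofVertex (G : CDG) (v : G.V) : FinPath G :=
  ⟨v, [], by intro a ha; simp at ha, List.IsChain.nil⟩

/-- Concatenation `μδ` of composable finite paths. -/
def concat (μ δ : FinPath G) (h : δ.base = μ.frng) : FinPath G where
  base := μ.base
  arrows := μ.arrows ++ δ.arrows
  head_src := by
    intro a ha
    cases hμ : μ.arrows with
    | nil =>
        rw [hμ] at ha
        simp only [List.nil_append] at ha
        have h1 : G.src a = δ.base := δ.head_src a ha
        have h2 : μ.frng = μ.base := by simp [FinPath.frng, hμ]
        rw [h1, h, h2]
    | cons b l =>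
        rw [hμ] at ha
        simp only [List.cons_append, List.head?_cons, Option.mem_def,
          Option.some.injEq] at ha
        cases ha
        exact μ.head_src _ (by rw [hμ]; rfl)
  chain := by
    refine List.IsChain.append μ.chain δ.chain ?_
    intro x hx y hy
    rw [Option.mem_def] at hx
    have h1 : μ.frng = G.rng x := by simp [FinPath.frng, hx]
    have h2 : G.src y = δ.base := δ.head_src y hy
    rw [h2, h, h1]

end FinPath

/-- The extension of a potential `F : G_Ar → ℝ` to finite paths:
`F(μ) = Σ_{i} F(a_i)`, with `F(v) = 0` for vertices. -/
def pot {G : CDG} (F : G.A → ℝ) (μ : FinPath G) : ℝ := (μ.arrows.map F).sum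

/-- The cylinder set `Z(μ)` of a finite path `μ`. -/
def cyl {G : CDG} (μ : FinPath G) : Set G.PathSpace :=
  {p | G.src (p.1 0) = μ.base ∧
    ∀ (i : ℕ) (h : i < μ.arrows.length), p.1 i = μ.arrows.get ⟨i, h⟩}

/-- The cylinder set `Z(v)` of a vertex `v`. -/
def cylV (G : CDG) (v : G.V) : Set G.PathSpace := {p | G.src (p.1 0) = v}

/-- An `e^{βF}`-conformal measure on `P(G)`: a non-zero Borel measure giving finite
measure to each `Z(v)` and satisfying `m(σ(B ∩ Z(a))) = e^{βF(a)} m(B ∩ Z(a))`. -/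
structure IsConformal (G : CDG) (F : G.A → ℝ) (β : ℝ)
    (m : Measure G.PathSpace) : Prop where
  ne_zero : m ≠ 0
  vert_fin : ∀ v : G.V, m (cylV G v) < ⊤
  conformal : ∀ (a : G.A) (B : Set G.PathSpace), MeasurableSet B →
      m (shift '' (B ∩ {p : G.PathSpace | p.1 0 = a})) =
        ENNReal.ofReal (Real.exp (β * F a)) * m (B ∩ {p : G.PathSpace | p.1 0 = a})

/-- The set `NW_G` of non-wandering vertices: those supporting a loop. -/
def NW (G : CDG) : Set G.V :=
  {v | ∃ μ : FinPath G, 0 < μ.length ∧ μ.fsrc = v ∧ μ.frng = v}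

/-- The set `V_∞` of sinks and infinite emitters. -/
def Vinf (G : CDG) : Set G.V :=
  {v | (∀ a : G.A, G.src a ≠ v) ∨ {a : G.A | G.src a = v}.Infinite}

/-- A hereditary subset of vertices. -/
def Hereditary (G : CDG) (H : Set G.V) : Prop :=
  ∀ a : G.A, G.src a ∈ H → G.rng a ∈ H

/-- A saturated subset of vertices. -/
def Saturated (G : CDG) (H : Set G.V) : Prop :=
  ∀ v : G.V, v ∉ Vinf G → (∀ a : G.A, G.src a = v → G.rng a ∈ H) → v ∈ H

/-- `G` is cofinal when the only non-empty hereditary and saturated subset of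
vertices is the set of all vertices. -/
def Cofinal (G : CDG) : Prop :=
  ∀ H : Set G.V, H.Nonempty → Hereditary G H → Saturated G H → H = Set.univ

/-- `P(G)_rec`: the paths passing through every arrow of `NW_Ar` infinitely often. -/
def recSet (G : CDG) : Set G.PathSpace :=
  {p | ∀ a : G.A, G.src a ∈ NW G → ∀ n : ℕ, ∃ i ≥ n, p.1 i = a}

/-- `P(G)_wan`: the paths visiting every vertex at most finitely many times. -/
def wanSet (G : CDG) : Set G.PathSpace :=
  {p | ∀ v : G.V, {i : ℕ | G.src (p.1 i) = v}.Finite}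

/-- The matrix entry `A(β)^n_{v,w} = Σ_μ e^{-βF(μ)} ∈ [0,∞]`, summing over finite
paths `μ` of length `n` with `s(μ) = v` and `r(μ) = w`. -/
noncomputable def Apow (G : CDG) (F : G.A → ℝ) (β : ℝ) (n : ℕ) (v w : G.V) : ℝ≥0∞ :=
  ∑' μ : {μ : FinPath G // μ.length = n ∧ μ.fsrc = v ∧ μ.frng = w},
    ENNReal.ofReal (Real.exp (-(β * pot F μ.1)))

/-- An `A(β)`-harmonic vector: non-zero, finite, non-negative, and harmonic at
every vertex. -/
def IsHarmonicVec (G : CDG) (F : G.A → ℝ) (β : ℝ) (ψ : G.V → ℝ≥0∞) : Prop :=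
  ψ ≠ 0 ∧ (∀ v : G.V, ψ v ≠ ⊤) ∧
    ∀ v : G.V, ψ v =
      ∑' a : {a : G.A // G.src a = v},
        ENNReal.ofReal (Real.exp (-(β * F a.1))) * ψ (G.rng a.1)

end CDG

/-!
Suppose `m` does not live on `P(G)_wan`, so that some vertex `v` is visited infinitely often on a
set of positive measure. Then `v` is non-wandering, and by cofinality every vertex has a path to
`v`, so every `Z(u)` has positive measure. Conformality gives `m(Z(μ)) = e^{-βF(μ)} m(Z(r(μ)))`,
so by Borel–Cantelli the loops at `v` have infinite total weight `∑ e^{-βF(μ)}`. Hence the paths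
leaving `v` for good are null, since their translates `σ^{-|μ|}` over the loops `μ` at `v` are
disjoint subsets of `Z(v)`. Cofinality, applied to the vertices from which almost no path misses
`v`, shows that almost every path reaches `v`; so almost every path returns to `v` infinitely often.
Finally, for a non-wandering arrow `a` fix a path `ν` from `v` ending with the first occurrence of
`a`. The cylinders `Z(μν)` over the loops `μ` at `v` avoiding `a` are disjoint, so these loops have
finite total weight, and Borel–Cantelli shows that almost every path uses `a` infinitely often.
-/

section

open Function

theorem tsum_mul_le_measure_of_pairwise_disjoint {α ι : Type*} [MeasurableSpace α] [Countable ι]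
    {μ : Measure α} {D : ι → Set α} {Y : Set α} {w : ι → ℝ≥0∞} {c : ℝ≥0∞}
    (hD : ∀ i, MeasurableSet (D i)) (hDY : ∀ i, D i ⊆ Y) (hdisj : Pairwise (Disjoint on D))
    (hμ : ∀ i, μ (D i) = w i * c) : (∑' i, w i) * c ≤ μ Y :=
  calc (∑' i, w i) * c = ∑' i, μ (D i) := by simp only [hμ, ENNReal.tsum_mul_right]
    _ = μ (⋃ i, D i) := (measure_iUnion hdisj hD).symm
    _ ≤ μ Y := measure_mono (Set.iUnion_subset hDY)

theorem pairwise_disjoint_of_rank {α ι : Type*} {D : ι → Set α} (rank : ι → ℕ)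
    (heq : ∀ i j x, rank i = rank j → x ∈ D i → x ∈ D j → i = j)
    (hlt : ∀ i j x, rank i < rank j → x ∈ D i → x ∈ D j → False) : Pairwise (Disjoint on D) := by
  intro i j hij
  refine Set.disjoint_left.2 fun x hi hj => ?_
  rcases lt_trichotomy (rank i) (rank j) with h | h | h
  exacts [hlt i j x h hi hj, hij (heq i j x h hi hj), hlt j i x h hj hi]

end

namespace CDG

open Filter Function

variable {G : CDG}

-- Finite paths are handled as lists of arrows; `isPath_iff` compares this with `FinPath`.
inductive IsPath : G.V → List G.A → G.V → Prop
  | nil (v : G.V) : IsPath v [] v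
  | cons {v w : G.V} {a : G.A} {l : List G.A} :
      G.src a = v → IsPath (G.rng a) l w → IsPath v (a :: l) w

namespace IsPath

variable {u v w : G.V} {l l₁ l₂ : List G.A}

theorem append (h₁ : IsPath u l₁ v) (h₂ : IsPath v l₂ w) : IsPath u (l₁ ++ l₂) w := by
  induction h₁ with
  | nil => exact h₂
  | cons ha _ ih => exact .cons ha (ih h₂)

theorem exists_notMem_isPath_append_singleton {a : G.A} (h : IsPath v l w) (ha : G.src a = w) :
    ∃ t, a ∉ t ∧ IsPath v (t ++ [a]) (G.rng a) := by
  induction h with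
  | nil => exact ⟨[], List.not_mem_nil, .cons ha (.nil _)⟩
  | @cons v _ b _ hb _ ih =>
    by_cases hba : b = a
    · subst hba
      exact ⟨[], List.not_mem_nil, .cons hb (.nil _)⟩
    · obtain ⟨t, hat, ht⟩ := ih ha
      exact ⟨b :: t, by simp [Ne.symm hba, hat], .cons hb ht⟩

end IsPath

theorem getLast?_elim_cons (v : G.V) (a : G.A) (l : List G.A) :
    (a :: l).getLast?.elim v G.rng = l.getLast?.elim (G.rng a) G.rng := by
  cases l with
  | nil => rfl
  | cons b l => simp [List.getLast?_eq_some_getLast]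

theorem isPath_iff {v w : G.V} {l : List G.A} :
    IsPath v l w ↔ (∀ a ∈ l.head?, G.src a = v) ∧ l.IsChain (fun a b => G.rng a = G.src b) ∧
      l.getLast?.elim v G.rng = w := by
  induction l generalizing v with
  | nil =>
    refine ⟨fun h => ?_, fun ⟨_, _, h⟩ => h ▸ .nil v⟩
    cases h
    simp
  | cons a l ih =>
    simp only [List.head?_cons, Option.mem_def, Option.some.injEq, forall_eq', List.isChain_cons,
      getLast?_elim_cons]
    constructor
    · rintro (_ | ⟨ha, hl⟩)
      obtain ⟨hhead, hchain, hlast⟩ := ih.1 hl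
      exact ⟨ha, ⟨fun b hb => (hhead b hb).symm, hchain⟩, hlast⟩
    · rintro ⟨ha, ⟨hhead, hchain⟩, hlast⟩
      exact .cons ha (ih.2 ⟨fun b hb => (hhead b hb).symm, hchain, hlast⟩)

theorem mem_NW_iff {v : G.V} : v ∈ NW G ↔ ∃ l, l ≠ [] ∧ IsPath v l v := by
  constructor
  · rintro ⟨μ, hlen, rfl, hrng⟩
    exact ⟨μ.arrows, List.ne_nil_of_length_pos hlen, isPath_iff.2 ⟨μ.head_src, μ.chain, hrng⟩⟩
  · rintro ⟨l, hl, h⟩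
    obtain ⟨hhead, hchain, hlast⟩ := isPath_iff.1 h
    exact ⟨⟨v, l, hhead, hchain⟩, List.length_pos_of_ne_nil hl, rfl, hlast⟩

theorem Cofinal.exists_isPath (hcof : Cofinal G) {v : G.V} (hv : v ∈ NW G) (u : G.V) :
    ∃ l, IsPath u l v := by
  by_contra hu
  set H : Set G.V := {u | ¬∃ l, IsPath u l v}
  have hher : Hereditary G H := fun a ha ⟨l, hl⟩ => ha ⟨a :: l, .cons rfl hl⟩
  have hsat : Saturated G H := by
    rintro u - hsucc ⟨l, hl⟩
    cases hl with
    | nil =>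
      obtain ⟨_ | ⟨a, l⟩, hl, hloop⟩ := mem_NW_iff.1 hv
      · exact hl rfl
      · obtain _ | ⟨ha, hl⟩ := hloop
        exact hsucc a ha ⟨l, hl⟩
    | cons ha hl => exact hsucc _ ha ⟨_, hl⟩
  have hvH : v ∈ H := hcof H ⟨u, hu⟩ hher hsat ▸ Set.mem_univ v
  exact hvH ⟨[], .nil v⟩

def pathPrefix (p : G.PathSpace) (j : ℕ) : List G.A := List.ofFn fun i : Fin j => p.1 i

theorem iterate_shift_coe (n : ℕ) (p : G.PathSpace) (i : ℕ) : (shift^[n] p).1 i = p.1 (i + n) := by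
  induction n generalizing p with
  | zero => rfl
  | succ n ih => rw [Function.iterate_succ_apply, ih]; rfl

theorem isPath_pathPrefix (p : G.PathSpace) (j : ℕ) :
    IsPath (G.src (p.1 0)) (pathPrefix p j) (G.src (p.1 j)) := by
  induction j with
  | zero => exact .nil _
  | succ j ih =>
    rw [pathPrefix, List.ofFn_succ_last]
    exact ih.append (.cons rfl (p.2 j ▸ .nil _))

theorem isPath_pathPrefix_of_src_eq {p : G.PathSpace} {v : G.V} {j : ℕ} (h₀ : G.src (p.1 0) = v)
    (hj : G.src (p.1 j) = v) : IsPath v (pathPrefix p j) v := by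
  simpa only [h₀, hj] using isPath_pathPrefix p j

def pathCyl (v : G.V) (l : List G.A) : Set G.PathSpace :=
  cylV G v ∩ ⋂ (i : ℕ) (hi : i < l.length), {p | p.1 i = l[i]}

theorem mem_pathCyl {v : G.V} {l : List G.A} {p : G.PathSpace} :
    p ∈ pathCyl v l ↔ G.src (p.1 0) = v ∧ ∀ (i : ℕ) (hi : i < l.length), p.1 i = l[i] := by
  simp [pathCyl, cylV]

theorem pathCyl_subset_cylV (v : G.V) (l : List G.A) : pathCyl v l ⊆ cylV G v :=
  Set.inter_subset_left

theorem mem_pathCyl_pathPrefix {v : G.V} {p : G.PathSpace} (hp : p ∈ cylV G v) (j : ℕ) :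
    p ∈ pathCyl v (pathPrefix p j) :=
  mem_pathCyl.2 ⟨hp, fun i hi => by simp [pathPrefix]⟩

theorem pathCyl_append_subset (v : G.V) (l l' : List G.A) : pathCyl v (l ++ l') ⊆ pathCyl v l := by
  intro p hp
  refine mem_pathCyl.2 ⟨(mem_pathCyl.1 hp).1, fun i hi => ?_⟩
  rw [(mem_pathCyl.1 hp).2 i (by simp; omega), List.getElem_append_left hi]

theorem eq_of_mem_pathCyl {v : G.V} {l₁ l₂ : List G.A} (h : l₁.length = l₂.length)
    {p : G.PathSpace} (h₁ : p ∈ pathCyl v l₁) (h₂ : p ∈ pathCyl v l₂) : l₁ = l₂ :=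
  List.ext_getElem h fun i hi₁ hi₂ => by
    rw [← (mem_pathCyl.1 h₁).2 i hi₁, ← (mem_pathCyl.1 h₂).2 i hi₂]

def infVisits (v : G.V) : Set G.PathSpace := {p | ∃ᶠ i in atTop, G.src (p.1 i) = v}

def neverVisits (v : G.V) : Set G.PathSpace := {p | ∀ i, G.src (p.1 i) ≠ v}

def noReturn (v : G.V) : Set G.PathSpace := cylV G v ∩ {p | ∀ i, G.src (p.1 (i + 1)) ≠ v}

theorem noReturn_subset_cylV (v : G.V) : noReturn v ⊆ cylV G v := Set.inter_subset_left

def avoiding (a : G.A) : Set G.PathSpace := {p | ∀ i, p.1 i ≠ a}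

theorem mem_NW_of_mem_infVisits {p : G.PathSpace} {v : G.V} (hp : p ∈ infVisits v) : v ∈ NW G := by
  obtain ⟨i, hi⟩ := hp.exists
  obtain ⟨j, hij, hj⟩ := frequently_atTop.1 hp (i + 1)
  have h := isPath_pathPrefix (shift^[i] p) (j - i)
  rw [iterate_shift_coe, iterate_shift_coe, zero_add, Nat.sub_add_cancel (by omega), hi, hj] at h
  refine mem_NW_iff.2 ⟨_, ?_, h⟩
  rw [← List.length_pos_iff, pathPrefix, List.length_ofFn]
  omega

theorem iterate_shift_mem_infVisits {v : G.V} {p : G.PathSpace} (hp : p ∈ infVisits v) (n : ℕ) :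
    shift^[n] p ∈ infVisits v := by
  simp only [infVisits, Set.mem_ofPred_eq, iterate_shift_coe]
  have hp' : ∃ᶠ i in map (· + n) atTop, G.src (p.1 i) = v := by rwa [map_add_atTop_eq_nat]
  exact frequently_map.1 hp'

theorem compl_wanSet_subset : (wanSet G)ᶜ ⊆ ⋃ v, infVisits v := by
  intro p hp
  simp only [wanSet, Set.mem_compl_iff, Set.mem_ofPred_eq, not_forall] at hp
  obtain ⟨v, hv⟩ := hp
  exact Set.mem_iUnion.2 ⟨v, Nat.frequently_atTop_iff_infinite.2 hv⟩

theorem subset_iUnion_preimage_iterate_inter_cylV {v : G.V} {X : Set G.PathSpace}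
    (hX : ∀ p ∈ X, ∀ n, shift^[n] p ∈ X) (hXv : X ⊆ infVisits v) :
    X ⊆ ⋃ n, shift^[n] ⁻¹' (X ∩ cylV G v) := by
  intro p hp
  obtain ⟨n, hn⟩ := (hXv hp).exists
  refine Set.mem_iUnion.2 ⟨n, hX p hp n, ?_⟩
  simp only [cylV, Set.mem_ofPred_eq, iterate_shift_coe, zero_add, hn]

theorem compl_infVisits_subset (v : G.V) :
    (infVisits v)ᶜ ⊆ neverVisits v ∪ ⋃ n, shift^[n] ⁻¹' noReturn v := by
  intro p hp
  simp only [infVisits, Set.mem_compl_iff, Set.mem_ofPred_eq, Nat.frequently_atTop_iff_infinite,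
    Set.not_infinite] at hp
  rcases Set.eq_empty_or_nonempty {i | G.src (p.1 i) = v} with hempty | hne
  · exact Or.inl fun i hi => hempty.subset hi
  · obtain ⟨n, hn, hmax⟩ := Set.exists_max_image _ id hp hne
    refine Or.inr (Set.mem_iUnion.2 ⟨n, ?_, fun i hi => ?_⟩)
    · simpa [cylV, iterate_shift_coe] using hn
    · rw [iterate_shift_coe] at hi
      have := hmax _ hi
      simp only [id] at this
      omega

theorem compl_recSet_subset :
    (recSet G)ᶜ ⊆ ⋃ (a : {a : G.A // G.src a ∈ NW G}) (n : ℕ), shift^[n] ⁻¹' avoiding a.1 := by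
  intro p hp
  simp only [recSet, Set.mem_compl_iff, Set.mem_ofPred_eq, not_forall, not_exists, not_and] at hp
  obtain ⟨a, ha, n, hn⟩ := hp
  refine Set.mem_iUnion₂.2 ⟨⟨a, ha⟩, n, fun i => ?_⟩
  rw [iterate_shift_coe]
  exact hn _ (Nat.le_add_left n i)

section Measurability

theorem measurable_coord (i : ℕ) : Measurable fun p : G.PathSpace => p.1 i :=
  (measurable_pi_apply i).comp measurable_subtype_coe

theorem measurableSet_coord (i : ℕ) (s : Set G.A) : MeasurableSet {p : G.PathSpace | p.1 i ∈ s} :=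
  measurable_coord i MeasurableSpace.measurableSet_top

theorem measurable_shift : Measurable (shift : G.PathSpace → G.PathSpace) :=
  (measurable_pi_lambda _ fun i => measurable_coord (i + 1)).subtype_mk

theorem measurableSet_cylV (v : G.V) : MeasurableSet (cylV G v) :=
  measurableSet_coord 0 {a | G.src a = v}

theorem measurableSet_pathCyl (v : G.V) (l : List G.A) : MeasurableSet (pathCyl v l) :=
  (measurableSet_cylV v).inter <| .iInter fun i => .iInter fun _ => measurableSet_coord i {_}

theorem measurableSet_noReturn (v : G.V) : MeasurableSet (noReturn v) := by
  refine (measurableSet_cylV v).inter ?_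
  simp only [Set.ofPred_forall]
  exact .iInter fun i => measurableSet_coord (i + 1) {a | G.src a ≠ v}

theorem measurableSet_neverVisits (v : G.V) : MeasurableSet (neverVisits v) := by
  simp only [neverVisits, Set.ofPred_forall]
  exact .iInter fun i => measurableSet_coord i {a | G.src a ≠ v}

end Measurability

noncomputable def pathWeight (F : G.A → ℝ) (β : ℝ) (l : List G.A) : ℝ≥0∞ :=
  ENNReal.ofReal (Real.exp (-(β * (l.map F).sum)))

section PathWeight

variable (F : G.A → ℝ) (β : ℝ)

theorem pathWeight_ne_zero (l : List G.A) : pathWeight F β l ≠ 0 :=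
  ENNReal.ofReal_ne_zero_iff.2 (Real.exp_pos _)

theorem pathWeight_append (l₁ l₂ : List G.A) :
    pathWeight F β (l₁ ++ l₂) = pathWeight F β l₁ * pathWeight F β l₂ := by
  rw [pathWeight, pathWeight, pathWeight, ← ENNReal.ofReal_mul (Real.exp_pos _).le, ← Real.exp_add,
    List.map_append, List.sum_append, mul_add, neg_add]

theorem pathWeight_cons (a : G.A) (l : List G.A) :
    pathWeight F β (a :: l) = ENNReal.ofReal (Real.exp (-(β * F a))) * pathWeight F β l := by
  rw [← List.singleton_append, pathWeight_append, pathWeight, List.map_singleton,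
    List.sum_singleton]

end PathWeight

theorem pathCyl_cons {v : G.V} {a : G.A} {l : List G.A} (ha : G.src a = v) :
    pathCyl v (a :: l) = {p | p.1 0 = a} ∩ shift ⁻¹' pathCyl (G.rng a) l := by
  ext p
  simp only [mem_pathCyl, Set.mem_inter_iff, Set.mem_preimage, Set.mem_ofPred_eq, List.length_cons]
  constructor
  · rintro ⟨-, h⟩
    have h0 : p.1 0 = a := h 0 (Nat.succ_pos _)
    refine ⟨h0, by rw [shift, ← p.2 0, h0], fun i hi => h (i + 1) (Nat.succ_lt_succ hi)⟩
  · rintro ⟨h0, -, h⟩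
    refine ⟨h0 ▸ ha, fun i hi => ?_⟩
    cases i with
    | zero => exact h0
    | succ i => exact h i (Nat.succ_lt_succ_iff.1 hi)

theorem image_shift_preimage_inter (a : G.A) (C : Set G.PathSpace) :
    shift '' (shift ⁻¹' C ∩ {p | p.1 0 = a}) = C ∩ cylV G (G.rng a) := by
  refine Set.Subset.antisymm ?_ fun q ⟨hq, hqa⟩ => ?_
  · rintro _ ⟨p, ⟨hp, rfl⟩, rfl⟩
    exact ⟨hp, (p.2 0).symm⟩
  · let p : G.PathSpace :=
      ⟨fun i => Nat.casesOn i a q.1, fun i => by cases i; exacts [hqa.symm, q.2 _]⟩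
    exact ⟨p, ⟨hq, rfl⟩, rfl⟩

namespace IsConformal

open MeasureTheory.Measure

variable {F : G.A → ℝ} {β : ℝ} {m : Measure G.PathSpace}

theorem measure_preimage_shift_inter (hm : IsConformal G F β m) (a : G.A) {C : Set G.PathSpace}
    (hC : MeasurableSet C) :
    m (shift ⁻¹' C ∩ {p | p.1 0 = a}) =
      ENNReal.ofReal (Real.exp (-(β * F a))) * m (C ∩ cylV G (G.rng a)) := by
  rw [← image_shift_preimage_inter, hm.conformal a _ (measurable_shift hC), ← mul_assoc,
    ← ENNReal.ofReal_mul (Real.exp_pos _).le, ← Real.exp_add, neg_add_cancel, Real.exp_zero,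
    ENNReal.ofReal_one, one_mul]

theorem quasiMeasurePreserving_shift (hm : IsConformal G F β m) :
    QuasiMeasurePreserving shift m m := by
  refine ⟨measurable_shift, AbsolutelyContinuous.mk fun C hC hC0 => ?_⟩
  rw [map_apply measurable_shift hC]
  have hcover : shift ⁻¹' C ⊆ ⋃ a, shift ⁻¹' C ∩ {p | p.1 0 = a} :=
    fun p hp => Set.mem_iUnion.2 ⟨p.1 0, hp, rfl⟩
  refine measure_mono_null hcover (measure_iUnion_null fun a => ?_)
  rw [hm.measure_preimage_shift_inter a hC, measure_mono_null Set.inter_subset_left hC0, mul_zero]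

theorem measure_eq_zero_of_subset_iUnion_preimage_iterate (hm : IsConformal G F β m)
    {X Y : Set G.PathSpace} (hX : X ⊆ ⋃ n, shift^[n] ⁻¹' Y) (hY : m Y = 0) : m X = 0 :=
  measure_mono_null hX <| measure_iUnion_null fun n =>
    (hm.quasiMeasurePreserving_shift.iterate n).preimage_null hY

theorem measure_preimage_iterate_inter_pathCyl (hm : IsConformal G F β m) {v w : G.V}
    {l : List G.A} (h : IsPath v l w) {C : Set G.PathSpace} (hC : MeasurableSet C) :
    m (shift^[l.length] ⁻¹' C ∩ pathCyl v l) = pathWeight F β l * m (C ∩ cylV G w) := by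
  induction h with
  | nil v => simp [pathCyl, pathWeight]
  | @cons v w a l ha hl ih =>
    have hset : shift^[(a :: l).length] ⁻¹' C ∩ pathCyl v (a :: l) =
        shift ⁻¹' (shift^[l.length] ⁻¹' C ∩ pathCyl (G.rng a) l) ∩ {p | p.1 0 = a} := by
      rw [pathCyl_cons ha, List.length_cons, Function.iterate_succ, Set.preimage_comp,
        Set.preimage_inter]
      ac_rfl
    rw [hset, hm.measure_preimage_shift_inter a ((measurable_shift.iterate _ hC).inter
      (measurableSet_pathCyl _ _)), Set.inter_assoc,
      Set.inter_eq_left.2 (pathCyl_subset_cylV _ _), ih, pathWeight_cons, mul_assoc]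

theorem measure_pathCyl (hm : IsConformal G F β m) {v w : G.V} {l : List G.A}
    (h : IsPath v l w) : m (pathCyl v l) = pathWeight F β l * m (cylV G w) := by
  simpa using hm.measure_preimage_iterate_inter_pathCyl h MeasurableSet.univ

theorem measure_cylV_ne_zero (hm : IsConformal G F β m) {u v : G.V} {l : List G.A}
    (h : IsPath u l v) (hv : m (cylV G v) ≠ 0) : m (cylV G u) ≠ 0 := fun hu =>
  mul_ne_zero (pathWeight_ne_zero F β l) hv <|
    (hm.measure_pathCyl h).symm.trans (measure_mono_null (pathCyl_subset_cylV u l) hu)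

theorem measure_infVisits_inter_cylV_ne_zero (hm : IsConformal G F β m) {v : G.V}
    (h : m (infVisits v) ≠ 0) : m (infVisits v ∩ cylV G v) ≠ 0 := fun h0 =>
  h <| hm.measure_eq_zero_of_subset_iUnion_preimage_iterate
    (subset_iUnion_preimage_iterate_inter_cylV (fun _ hp n => iterate_shift_mem_infVisits hp n)
      subset_rfl) h0

theorem measure_cylV_inter_frequently_pathPrefix_mem (hm : IsConformal G F β m) {v : G.V}
    {S : Set (List G.A)} (hS : ∀ l ∈ S, IsPath v l v) (hT : ∑' l : S, pathWeight F β l ≠ ∞) :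
    m (cylV G v ∩ {p | ∃ᶠ j in atTop, pathPrefix p j ∈ S}) = 0 := by
  set E : ℕ → Set G.PathSpace := fun j => cylV G v ∩ {p | pathPrefix p j ∈ S}
  have hE : ∀ j, m (E j) ≤
      ∑' l : (fun l : S => l.1.length) ⁻¹' {j}, pathWeight F β l.1 * m (cylV G v) := by
    intro j
    calc m (E j) ≤ m (⋃ l : (fun l : S => l.1.length) ⁻¹' {j}, pathCyl v l.1.1) :=
          measure_mono fun p ⟨hp, hpS⟩ => Set.mem_iUnion.2
            ⟨⟨⟨_, hpS⟩, by simp [pathPrefix]⟩, mem_pathCyl_pathPrefix hp j⟩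
      _ ≤ ∑' l : (fun l : S => l.1.length) ⁻¹' {j}, m (pathCyl v l.1.1) := measure_iUnion_le _
      _ = _ := tsum_congr fun l => hm.measure_pathCyl (hS _ l.1.2)
  have hsum : ∑' j, m (E j) ≠ ∞ := by
    refine ne_top_of_le_ne_top ?_ (ENNReal.tsum_le_tsum hE)
    rw [ENNReal.tsum_fiberwise (fun l : S => pathWeight F β l * m (cylV G v)),
      ENNReal.tsum_mul_right]
    exact ENNReal.mul_ne_top hT (hm.vert_fin v).ne
  refine measure_mono_null (fun p ⟨hp, hfreq⟩ => ?_) (measure_limsup_atTop_eq_zero hsum)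
  exact mem_limsup_iff_frequently_mem.2 (hfreq.mono fun j hj => ⟨hp, hj⟩)

theorem tsum_pathWeight_loops_eq_top (hm : IsConformal G F β m) {v : G.V}
    (h : m (infVisits v ∩ cylV G v) ≠ 0) : ∑' l : {l | IsPath v l v}, pathWeight F β l = ∞ := by
  by_contra hT
  refine h (measure_mono_null ?_
    (hm.measure_cylV_inter_frequently_pathPrefix_mem (fun _ hl => hl) hT))
  rintro p ⟨hvis, hp⟩
  exact ⟨hp, hvis.mono fun j hj => isPath_pathPrefix_of_src_eq hp hj⟩

theorem measure_noReturn_eq_zero (hm : IsConformal G F β m) {v : G.V}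
    (hT : ∑' l : {l | IsPath v l v}, pathWeight F β l = ∞) : m (noReturn v) = 0 := by
  by_contra h0
  set D : {l | IsPath v l v} → Set G.PathSpace :=
    fun l => shift^[l.1.length] ⁻¹' noReturn v ∩ pathCyl v l
  -- `l` is recovered from a path in `D l` as its prefix up to its last visit to `v`.
  have hdisj : Pairwise (Disjoint on D) := by
    refine pairwise_disjoint_of_rank (fun l => l.1.length)
      (fun l₁ l₂ p h h₁ h₂ => Subtype.ext (eq_of_mem_pathCyl h h₁.2 h₂.2))
      (fun l₁ l₂ p h h₁ h₂ => h₁.1.2 (l₂.1.length - l₁.1.length - 1) ?_)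
    have h₂' := h₂.1.1
    simp only [cylV, Set.mem_ofPred_eq, iterate_shift_coe] at h₂' ⊢
    rwa [show l₂.1.length - l₁.1.length - 1 + 1 + l₁.1.length = 0 + l₂.1.length by omega]
  have hle := tsum_mul_le_measure_of_pairwise_disjoint (D := D)
    (fun l => (measurable_shift.iterate _ (measurableSet_noReturn v)).inter
      (measurableSet_pathCyl v l)) (fun l => Set.inter_subset_right.trans (pathCyl_subset_cylV v l))
    hdisj fun l => by
      rw [hm.measure_preimage_iterate_inter_pathCyl l.2 (measurableSet_noReturn v),
        Set.inter_eq_left.2 (noReturn_subset_cylV v)]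
  rw [hT, ENNReal.top_mul h0, top_le_iff] at hle
  exact (hm.vert_fin v).ne hle

theorem measure_neverVisits_inter_cylV_rng_eq_zero (hm : IsConformal G F β m) {v : G.V}
    (h : m (noReturn v) = 0) {b : G.A} (hb : m (neverVisits v ∩ cylV G (G.src b)) = 0) :
    m (neverVisits v ∩ cylV G (G.rng b)) = 0 := by
  have h0 : m (shift ⁻¹' neverVisits v ∩ {p | p.1 0 = b}) = 0 := by
    by_cases hbv : G.src b = v
    · refine measure_mono_null ?_ h
      rintro p ⟨hp, hpb : p.1 0 = b⟩
      exact ⟨(congrArg G.src hpb).trans hbv, hp⟩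
    · refine measure_mono_null ?_ hb
      rintro p ⟨hp, hpb : p.1 0 = b⟩
      have hp0 : G.src (p.1 0) = G.src b := congrArg G.src hpb
      exact ⟨fun | 0 => by rwa [hp0] | i + 1 => hp i, hp0⟩
  rw [hm.measure_preimage_shift_inter b (measurableSet_neverVisits v)] at h0
  exact (mul_eq_zero.1 h0).resolve_left (ENNReal.ofReal_ne_zero_iff.2 (Real.exp_pos _))

theorem measure_neverVisits_eq_zero (hm : IsConformal G F β m) (hcof : Cofinal G) {v : G.V}
    (h : m (noReturn v) = 0) : m (neverVisits v) = 0 := by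
  set H : Set G.V := {u | m (neverVisits v ∩ cylV G u) = 0}
  have hsat : Saturated G H := by
    rintro u - hsucc
    have hcover : neverVisits v ∩ cylV G u ⊆
        ⋃ b : {b : G.A // G.src b = u}, shift ⁻¹' neverVisits v ∩ {p | p.1 0 = b} :=
      fun p ⟨hp, hpu⟩ => Set.mem_iUnion.2 ⟨⟨p.1 0, hpu⟩, fun i => hp (i + 1), rfl⟩
    refine measure_mono_null hcover (measure_iUnion_null fun b => ?_)
    rw [hm.measure_preimage_shift_inter b (measurableSet_neverVisits v), hsucc b.1 b.2, mul_zero]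
  have hvH : v ∈ H := by
    refine measure_mono_null ?_ measure_empty
    rintro p ⟨hp, hpv⟩
    exact hp 0 hpv
  have hH := hcof H ⟨v, hvH⟩ (fun b hb => hm.measure_neverVisits_inter_cylV_rng_eq_zero h hb) hsat
  have hcover : neverVisits v ⊆ ⋃ u, neverVisits v ∩ cylV G u :=
    fun p hp => Set.mem_iUnion.2 ⟨G.src (p.1 0), hp, rfl⟩
  exact measure_mono_null hcover (measure_iUnion_null fun u => (hH ▸ Set.mem_univ u : u ∈ H))

theorem measure_compl_infVisits_eq_zero (hm : IsConformal G F β m) (hcof : Cofinal G) {v : G.V}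
    (hv : m (infVisits v ∩ cylV G v) ≠ 0) : m (infVisits v)ᶜ = 0 := by
  have hnoReturn := hm.measure_noReturn_eq_zero (hm.tsum_pathWeight_loops_eq_top hv)
  exact measure_mono_null (compl_infVisits_subset v) <|
    measure_union_null (hm.measure_neverVisits_eq_zero hcof hnoReturn)
      (hm.measure_eq_zero_of_subset_iUnion_preimage_iterate subset_rfl hnoReturn)

theorem tsum_pathWeight_loops_notMem_ne_top (hm : IsConformal G F β m) {v : G.V} {a : G.A}
    {t : List G.A} (hat : a ∉ t) (ht : IsPath v (t ++ [a]) (G.rng a))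
    (hpos : m (cylV G (G.rng a)) ≠ 0) :
    ∑' l : {l | IsPath v l v ∧ a ∉ l}, pathWeight F β l ≠ ∞ := by
  intro hT
  set D : {l | IsPath v l v ∧ a ∉ l} → Set G.PathSpace := fun l => pathCyl v (l.1 ++ t ++ [a])
  -- On `D l` the first occurrence of `a` is at position `|l ++ t|`, which determines `l`.
  have hdisj : Pairwise (Disjoint on D) := by
    refine pairwise_disjoint_of_rank (fun l => l.1.length)
      (fun l₁ l₂ p h h₁ h₂ => Subtype.ext ?_) (fun l₁ l₂ p h h₁ h₂ => ?_)
    · simpa using eq_of_mem_pathCyl (by simp [h]) h₁ h₂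
    · have hk : p.1 (l₁.1 ++ t).length = a := by
        simpa using (mem_pathCyl.1 h₁).2 (l₁.1 ++ t).length (by simp)
      have hk' := (mem_pathCyl.1 (pathCyl_append_subset v _ _ h₂)).2 (l₁.1 ++ t).length
        (by simp only [List.length_append] at h ⊢; omega)
      have hmem : p.1 (l₁.1 ++ t).length ∈ l₂.1 ++ t := hk' ▸ List.getElem_mem _
      rw [hk] at hmem
      rcases List.mem_append.1 hmem with h | h
      exacts [l₂.2.2 h, hat h]
  have hle := tsum_mul_le_measure_of_pairwise_disjoint (D := D) (w := fun l => pathWeight F β l)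
    (c := pathWeight F β (t ++ [a]) * m (cylV G (G.rng a))) (fun l => measurableSet_pathCyl _ _)
    (fun l => pathCyl_subset_cylV _ _) hdisj fun l => by
      rw [hm.measure_pathCyl (List.append_assoc _ _ _ ▸ l.2.1.append ht), List.append_assoc,
        pathWeight_append, mul_assoc]
  rw [hT, ENNReal.top_mul (mul_ne_zero (pathWeight_ne_zero F β _) hpos), top_le_iff] at hle
  exact (hm.vert_fin v).ne hle

theorem measure_avoiding_eq_zero (hm : IsConformal G F β m) {v : G.V} {a : G.A} {l : List G.A}
    (hfull : m (infVisits v)ᶜ = 0) (hl : IsPath v l (G.src a)) (hpos : m (cylV G (G.rng a)) ≠ 0) :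
    m (avoiding a) = 0 := by
  obtain ⟨t, hat, ht⟩ := hl.exists_notMem_isPath_append_singleton rfl
  set X := avoiding a ∩ infVisits v
  have hX : m (X ∩ cylV G v) = 0 := by
    refine measure_mono_null ?_ (hm.measure_cylV_inter_frequently_pathPrefix_mem (fun _ hl => hl.1)
      (hm.tsum_pathWeight_loops_notMem_ne_top hat ht hpos))
    rintro p ⟨⟨hpa, hvis⟩, hp⟩
    refine ⟨hp, hvis.mono fun j hj => ⟨isPath_pathPrefix_of_src_eq hp hj, ?_⟩⟩
    simpa [pathPrefix, List.mem_ofFn] using fun _ => hpa _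
  have hXshift : ∀ p ∈ X, ∀ n, shift^[n] p ∈ X := fun p ⟨hpa, hvis⟩ n =>
    ⟨fun i => by rw [iterate_shift_coe]; exact hpa _, iterate_shift_mem_infVisits hvis n⟩
  have hsub : avoiding a ⊆ (infVisits v)ᶜ ∪ X := fun p hpa => by
    by_cases hvis : p ∈ infVisits v
    exacts [Or.inr ⟨hpa, hvis⟩, Or.inl hvis]
  exact measure_mono_null hsub <| measure_union_null hfull <|
    hm.measure_eq_zero_of_subset_iUnion_preimage_iterate
      (subset_iUnion_preimage_iterate_inter_cylV hXshift Set.inter_subset_right) hX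

end IsConformal

end CDG

open CDG in
theorem stmt8_general (G : CDG) (hcof : Cofinal G)
    (F : G.A → ℝ) (β : ℝ) (m : MeasureTheory.Measure G.PathSpace)
    (hm : IsConformal G F β m) :
    m (recSet G)ᶜ = 0 ∨ m (wanSet G)ᶜ = 0 := by
  by_cases hwan : m (wanSet G)ᶜ = 0
  · exact Or.inr hwan
  obtain ⟨v, hv⟩ : ∃ v, m (infVisits v) ≠ 0 := by
    by_contra! h
    exact hwan (measure_mono_null compl_wanSet_subset (measure_iUnion_null h))
  have hvNW : v ∈ NW G := mem_NW_of_mem_infVisits (nonempty_of_measure_ne_zero hv).some_mem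
  have hvisits := hm.measure_infVisits_inter_cylV_ne_zero hv
  have hfull := hm.measure_compl_infVisits_eq_zero hcof hvisits
  refine Or.inl (measure_mono_null compl_recSet_subset (measure_iUnion_null fun a => ?_))
  obtain ⟨l, hl⟩ := hcof.exists_isPath a.2 v
  obtain ⟨l', hl'⟩ := hcof.exists_isPath hvNW (G.rng a)
  have hpos := hm.measure_cylV_ne_zero hl' fun h0 =>
    hvisits (measure_mono_null Set.inter_subset_right h0)
  exact hm.measure_eq_zero_of_subset_iUnion_preimage_iterate subset_rfl
    (hm.measure_avoiding_eq_zero hfull hl hpos)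

open CDG in
/-- for a cofinal graph with `NW_G ≠ ∅`, every `e^{βF}`-conformal measure
is concentrated either on `P(G)_rec` or on `P(G)_wan`. -/
theorem stmt8 (G : CDG) (hcof : Cofinal G) (hne : (NW G).Nonempty)
    (F : G.A → ℝ) (β : ℝ) (m : MeasureTheory.Measure G.PathSpace)
    (hm : IsConformal G F β m) :
    m (recSet G)ᶜ = 0 ∨ m (wanSet G)ᶜ = 0 :=
  stmt8_general G hcof F β m hm
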